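/- Characterization of extreme points of discrete N-representable 2-marginals: the set of extreme points of ℛ₂ (the set of ℓ×ℓ matrices arising as 2-marginals of symmetric N-point probability tensors on a state space of size ℓ) equals {(N/(N−1))λλᵀ − (1/(N−1))diag(λ) : λ ∈ ℝ^ℓ, λ ≥ 0, 𝟙ᵀλ = 1, each λ_i ∈ {0, 1/N, 2/N,…}}; in particular ℛ₂ is the convex hull of these matrices. -/

import Mathlib

/-!
A symmetric tensor is a mixture of symmetrized Dirac tensors at configurations `x`, and the
2-marginal of the symmetrized Dirac tensor at `x` is `(N/(N-1)) λλᵀ - diag(λ)/(N-1)`, where `λ`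
is the vector of occupation fractions of `x`: averaged over all `N(N-1)` ordered pairs of distinct
sites, exactly `N²λᵢλⱼ - δᵢⱼNλᵢ` pairs carry the states `(i, j)`. Hence `ℛ₂` is the convex hull of
these matrices.

For extremality, `D(A) = (N-1) tr A - N ‖A𝟙‖² + 1` equals `N` times the variance of `λ` under the
mixture, so `D ≥ 0` on `ℛ₂`, with equality only at the matrices above. Since `D` is affine in `A`
minus a strictly convex function of the row sums `A𝟙`, a point where `D` vanishes cannot be a
proper convex combination of two points of `ℛ₂`.
-/

/-- The set `ℛ₂` of discrete `N`-representable 2-marginals (with `N = M + 2`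
particles and state space of size `ℓ`): all `ℓ×ℓ` matrices arising as 2-marginals
`Γ_{i₁i₂} = ∑_{i₃,…,i_N} γ_{i₁i₂i₃…i_N}` of symmetric probability tensors `γ`
(nonnegative entries summing to `1`, invariant under index permutations). -/
def repr2Marginals (ℓ M : ℕ) : Set (Matrix (Fin ℓ) (Fin ℓ) ℝ) :=
  {Γ | ∃ γ : (Fin (M + 2) → Fin ℓ) → ℝ,
    (∀ idx, 0 ≤ γ idx) ∧ (∑ idx : Fin (M + 2) → Fin ℓ, γ idx = 1) ∧
    (∀ (σ : Equiv.Perm (Fin (M + 2))) (idx : Fin (M + 2) → Fin ℓ), γ (idx ∘ σ) = γ idx) ∧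
    ∀ i j : Fin ℓ, Γ i j
      = ∑ idx : Fin (M + 2) → Fin ℓ, if idx 0 = i ∧ idx 1 = j then γ idx else 0}

/-- The conjectured extreme points: matrices `(N/(N−1))λλᵀ − (1/(N−1))diag(λ)` with
`λ ≥ 0`, `𝟙ᵀλ = 1`, and each `λ_i ∈ {0, 1/N, 2/N, …}` (here `N = M + 2`). -/
def sparseExtremals (ℓ M : ℕ) : Set (Matrix (Fin ℓ) (Fin ℓ) ℝ) :=
  {Γ | ∃ lam : Fin ℓ → ℝ, (∀ i, 0 ≤ lam i) ∧ (∑ i, lam i = 1) ∧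
    (∀ i, ∃ k : ℕ, lam i = (k : ℝ) / (M + 2)) ∧
    Γ = (((M : ℝ) + 2) / ((M : ℝ) + 1)) • Matrix.of (fun i j => lam i * lam j)
        - (((M : ℝ) + 1))⁻¹ • Matrix.diagonal lam}

open Finset

section Occupancy

variable {α β : Type*} [Fintype α] [DecidableEq β]

def occupancy (x : α → β) (i : β) : ℕ := #{a | x a = i}

lemma occupancy_eq_sum (x : α → β) (i : β) :
    (occupancy x i : ℝ) = ∑ a, if x a = i then 1 else 0 :=
  (sum_boole _ _).symm

lemma occupancy_comp_perm (x : α → β) (σ : Equiv.Perm α) :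
    occupancy (x ∘ σ) = occupancy x := by
  ext i
  simp only [occupancy, card_filter, Function.comp_apply]
  exact Equiv.sum_comp σ (fun a => if x a = i then 1 else 0)

lemma exists_occupancy_eq [Fintype β] (k : β → ℕ) (hk : ∑ i, k i = Fintype.card α) :
    ∃ x : α → β, occupancy x = k := by
  have e : α ≃ Σ i, Fin (k i) :=
    Fintype.equivOfCardEq (by rw [Fintype.card_sigma]; simp [hk])
  refine ⟨fun a => (e a).1, funext fun i => ?_⟩
  rw [occupancy, ← Fintype.card_subtype]
  calc Fintype.card {a // (e a).1 = i}
      = Fintype.card {s : Σ i, Fin (k i) // s.1 = i} :=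
        Fintype.card_congr (e.subtypeEquiv fun _ => Iff.rfl)
    _ = k i := by
      rw [Fintype.card_congr (Equiv.sigmaSubtype i), Fintype.card_fin]

lemma sum_occupancy [Fintype β] (x : α → β) : ∑ i, occupancy x i = Fintype.card α :=
  (card_eq_sum_card_fiberwise fun a _ => mem_univ (x a)).symm

variable [DecidableEq α]

lemma sum_sum_ite_ne (t : ℝ) :
    ∑ a : α, ∑ b : α, (if a ≠ b then t else 0) = Fintype.card α * (Fintype.card α - 1) * t := by
  have h : ∀ a : α, ∑ b, (if a ≠ b then t else 0) = ∑ b : α, t - ∑ b, if a = b then t else 0 := by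
    intro a
    rw [eq_sub_iff_add_eq, ← sum_add_distrib]
    exact sum_congr rfl fun b _ => by split_ifs <;> simp_all
  simp only [h, sum_ite_eq, mem_univ, if_true, sum_const, card_univ, nsmul_eq_mul]
  ring

lemma sum_sum_ite_ne_and_eq_and_eq (x : α → β) (i j : β) :
    ∑ a, ∑ b, (if a ≠ b ∧ x a = i ∧ x b = j then 1 else 0 : ℝ)
      = occupancy x i * occupancy x j - if i = j then (occupancy x i : ℝ) else 0 := by
  have hterm : ∀ a b, (if a ≠ b ∧ x a = i ∧ x b = j then 1 else 0 : ℝ)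
      = (if x a = i then 1 else 0) * (if x b = j then 1 else 0)
        - if a = b then (if x a = i ∧ i = j then 1 else 0) else 0 := by
    intro a b
    by_cases hab : a = b
    · subst hab; split_ifs <;> simp_all
    · split_ifs <;> simp_all
  simp_rw [hterm, sum_sub_distrib, ← mul_sum, ← sum_mul, ← occupancy_eq_sum, sum_ite_eq,
    mem_univ, if_true]
  split_ifs with h
  · simp [h, occupancy_eq_sum]
  · simp [h]

end Occupancy

section DiracMarginal

variable {β : Type*} [DecidableEq β]

/-- The 2-marginal of the uniform distribution over the rearrangements of any configuration of
`M + 2` particles with occupation fractions `lam`. -/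
noncomputable def diracMarginal (M : ℕ) (lam : β → ℝ) : Matrix β β ℝ :=
  (((M : ℝ) + 2) / ((M : ℝ) + 1)) • Matrix.of (fun i j => lam i * lam j)
    - (((M : ℝ) + 1))⁻¹ • Matrix.diagonal lam

lemma diracMarginal_apply (M : ℕ) (lam : β → ℝ) (i j : β) :
    diracMarginal M lam i j = ((M : ℝ) + 2) / ((M : ℝ) + 1) * (lam i * lam j)
      - (if i = j then ((M : ℝ) + 1)⁻¹ * lam i else 0) := by
  by_cases h : i = j <;> simp [diracMarginal, h, mul_comm]

variable {α : Type*} [Fintype α]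

noncomputable def occupationFraction (x : α → β) (i : β) : ℝ := occupancy x i / Fintype.card α

lemma sum_occupationFraction [Nonempty α] [Fintype β] (x : α → β) :
    ∑ i, occupationFraction x i = 1 := by
  simp_rw [occupationFraction, ← sum_div]
  rw [← Nat.cast_sum, sum_occupancy, div_self (by positivity)]

lemma diracMarginal_occupationFraction_apply {M : ℕ} (hα : Fintype.card α = M + 2) (x : α → β)
    (i j : β) :
    diracMarginal M (occupationFraction x) i j * (((M : ℝ) + 2) * ((M : ℝ) + 1))
      = occupancy x i * occupancy x j - if i = j then (occupancy x i : ℝ) else 0 := by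
  have hM : (M : ℝ) + 1 ≠ 0 := by positivity
  rw [diracMarginal_apply, occupationFraction, occupationFraction, hα]
  push_cast
  split_ifs
  · field_simp
  · field_simp
    ring

end DiracMarginal

section PairMarginal

variable {α β : Type*} [Fintype α] [DecidableEq α] [Fintype β] [DecidableEq β]

def pairMarginal (γ : (α → β) → ℝ) (a b : α) (i j : β) : ℝ :=
  ∑ x, if x a = i ∧ x b = j then γ x else 0

variable {γ : (α → β) → ℝ}

lemma pairMarginal_perm (hγ : ∀ (σ : Equiv.Perm α) x, γ (x ∘ σ) = γ x)
    (σ : Equiv.Perm α) (a b : α) : pairMarginal γ (σ a) (σ b) = pairMarginal γ a b := by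
  ext i j
  refine Fintype.sum_equiv (σ.symm.arrowCongr (Equiv.refl β)) _ _ fun x => ?_
  change _ = if x (σ a) = i ∧ x (σ b) = j then γ (x ∘ σ) else 0
  rw [hγ]

lemma pairMarginal_eq_of_ne (hγ : ∀ (σ : Equiv.Perm α) x, γ (x ∘ σ) = γ x)
    {a b c d : α} (hab : a ≠ b) (hcd : c ≠ d) : pairMarginal γ a b = pairMarginal γ c d := by
  obtain ⟨σ, rfl, rfl⟩ := MulAction.is_two_pretransitive_iff.mp
    (Equiv.Perm.isMultiplyPretransitive α 2) hcd hab
  exact pairMarginal_perm hγ σ c d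

lemma sum_sum_ite_ne_pairMarginal (i j : β) :
    ∑ a, ∑ b, (if a ≠ b then pairMarginal γ a b i j else 0)
      = ∑ x, γ x * (occupancy x i * occupancy x j - if i = j then (occupancy x i : ℝ) else 0) := by
  simp_rw [← sum_sum_ite_ne_and_eq_and_eq, mul_sum, mul_ite, mul_one, mul_zero, pairMarginal]
  calc _ = ∑ a, ∑ b, ∑ x, if a ≠ b ∧ x a = i ∧ x b = j then γ x else 0 := by
        refine sum_congr rfl fun a _ => sum_congr rfl fun b _ => ?_
        split_ifs with h <;> simp [h]
    _ = _ := (sum_congr rfl fun _ _ => sum_comm).trans sum_comm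

theorem pairMarginal_eq_sum_mul_diracMarginal {M : ℕ} (hα : Fintype.card α = M + 2)
    (hγ : ∀ (σ : Equiv.Perm α) x, γ (x ∘ σ) = γ x) {a b : α} (hab : a ≠ b)
    (i j : β) : pairMarginal γ a b i j = ∑ x, γ x * diracMarginal M (occupationFraction x) i j := by
  have hN : ((M : ℝ) + 2) * ((M : ℝ) + 1) ≠ 0 := by positivity
  apply mul_right_cancel₀ hN
  calc pairMarginal γ a b i j * (((M : ℝ) + 2) * ((M : ℝ) + 1))
      = ∑ c, ∑ d, (if c ≠ d then pairMarginal γ a b i j else 0) := by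
        rw [sum_sum_ite_ne, hα]; push_cast; ring
    _ = ∑ c, ∑ d, (if c ≠ d then pairMarginal γ c d i j else 0) :=
        sum_congr rfl fun c _ => sum_congr rfl fun d _ => by
          split_ifs with hcd
          · rw [pairMarginal_eq_of_ne hγ hab hcd]
          · rfl
    _ = _ := by
        simp_rw [sum_sum_ite_ne_pairMarginal, sum_mul, mul_assoc,
          diracMarginal_occupationFraction_apply hα]

end PairMarginal

section Defect

lemma sum_mul_sq_sub_sum_mul {ι : Type*} [Fintype ι] {w : ι → ℝ} (hw : ∑ x, w x = 1)
    (v : ι → ℝ) :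
    ∑ x, w x * (v x - ∑ y, w y * v y) ^ 2 = ∑ x, w x * v x ^ 2 - (∑ x, w x * v x) ^ 2 := by
  set m := ∑ y, w y * v y
  have h : ∀ x, w x * (v x - m) ^ 2 = w x * v x ^ 2 - 2 * m * (w x * v x) + m ^ 2 * w x :=
    fun x => by ring
  simp_rw [h, sum_add_distrib, sum_sub_distrib, ← mul_sum, hw]
  ring

variable {β : Type*} [Fintype β] {M : ℕ}

lemma eq_of_sum_sub_sq_eq_zero {u v : β → ℝ} (h : ∑ i, (u i - v i) ^ 2 = 0) : u = v := by
  funext i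
  have := (Fintype.sum_eq_zero_iff_of_nonneg fun i => sq_nonneg (u i - v i)).mp h
  exact sub_eq_zero.mp (pow_eq_zero_iff two_ne_zero |>.mp (congrFun this i))

noncomputable def marginalDefect (M : ℕ) (A : Matrix β β ℝ) : ℝ :=
  ((M : ℝ) + 1) * A.trace - ((M : ℝ) + 2) * ∑ i, (∑ j, A i j) ^ 2 + 1

lemma marginalDefect_add_smul {a b : ℝ} (hab : a + b = 1) (A B : Matrix β β ℝ) :
    marginalDefect M (a • A + b • B) = a * marginalDefect M A + b * marginalDefect M B
      + ((M : ℝ) + 2) * (a * b) * ∑ i, (∑ j, A i j - ∑ j, B i j) ^ 2 := by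
  obtain rfl : b = 1 - a := by linarith
  have hsq : ∀ u v : ℝ, (a * u + (1 - a) * v) ^ 2
      = a * u ^ 2 + (1 - a) * v ^ 2 - a * (1 - a) * (u - v) ^ 2 := fun u v => by ring
  simp only [marginalDefect, Matrix.trace_add, Matrix.trace_smul, Matrix.add_apply,
    Matrix.smul_apply, smul_eq_mul, sum_add_distrib, ← mul_sum, hsq, sum_sub_distrib]
  ring

variable [DecidableEq β]

lemma sum_diracMarginal_apply {lam : β → ℝ} (hlam : ∑ i, lam i = 1) (i : β) :
    ∑ j, diracMarginal M lam i j = lam i := by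
  have hM : (M : ℝ) + 1 ≠ 0 := by positivity
  simp_rw [diracMarginal_apply, sum_sub_distrib, ← mul_sum, hlam, sum_ite_eq, mem_univ, if_true]
  field_simp
  ring

lemma trace_diracMarginal {lam : β → ℝ} (hlam : ∑ i, lam i = 1) :
    ((M : ℝ) + 1) * (diracMarginal M lam).trace = ((M : ℝ) + 2) * ∑ i, lam i ^ 2 - 1 := by
  have hM : (M : ℝ) + 1 ≠ 0 := by positivity
  simp_rw [Matrix.trace, Matrix.diag, diracMarginal_apply, if_true, sum_sub_distrib, ← mul_sum,
    hlam, mul_sub, sq]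
  field_simp

lemma marginalDefect_diracMarginal {lam : β → ℝ} (hlam : ∑ i, lam i = 1) :
    marginalDefect M (diracMarginal M lam) = 0 := by
  simp only [marginalDefect, trace_diracMarginal hlam, sum_diracMarginal_apply hlam]
  ring

lemma sum_sum_smul_diracMarginal_apply {ι : Type*} [Fintype ι] (w : ι → ℝ) {lam : ι → β → ℝ}
    (hlam : ∀ x, ∑ i, lam x i = 1) (i : β) :
    ∑ j, (∑ x, w x • diracMarginal M (lam x)) i j = ∑ x, w x * lam x i := by
  simp_rw [Matrix.sum_apply, Matrix.smul_apply, smul_eq_mul]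
  rw [sum_comm]
  simp_rw [← mul_sum, sum_diracMarginal_apply (hlam _)]

lemma marginalDefect_sum_smul_diracMarginal {ι : Type*} [Fintype ι] {w : ι → ℝ}
    (hw : ∑ x, w x = 1) {lam : ι → β → ℝ} (hlam : ∀ x, ∑ i, lam x i = 1) :
    marginalDefect M (∑ x, w x • diracMarginal M (lam x))
      = ((M : ℝ) + 2) * ∑ x, w x * ∑ i, (lam x i - ∑ y, w y * lam y i) ^ 2 := by
  have htrace : ((M : ℝ) + 1) * (∑ x, w x • diracMarginal M (lam x)).trace
      = ((M : ℝ) + 2) * ∑ x, w x * ∑ i, lam x i ^ 2 - 1 := by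
    simp_rw [Matrix.trace_sum, Matrix.trace_smul, smul_eq_mul, mul_sum, mul_left_comm _ (w _),
      ← mul_sum, trace_diracMarginal (hlam _)]
    simp_rw [mul_sub, sum_sub_distrib, mul_one, hw]
  have hvar : ∑ x, w x * ∑ i, (lam x i - ∑ y, w y * lam y i) ^ 2
      = ∑ x, w x * ∑ i, lam x i ^ 2 - ∑ i, (∑ x, w x * lam x i) ^ 2 := by
    simp_rw [mul_sum]
    rw [sum_comm, sum_comm (f := fun x i => w x * lam x i ^ 2), ← sum_sub_distrib]
    exact sum_congr rfl fun i _ => sum_mul_sq_sub_sum_mul hw (lam · i)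
  simp only [marginalDefect, htrace, sum_sum_smul_diracMarginal_apply w hlam, hvar]
  ring

end Defect

section Representability

variable {ℓ M : ℕ}

lemma convex_repr2Marginals : Convex ℝ (repr2Marginals ℓ M) := by
  rintro A ⟨γ₁, hγ₁0, hγ₁1, hγ₁sym, hγ₁A⟩ B ⟨γ₂, hγ₂0, hγ₂1, hγ₂sym, hγ₂B⟩ a b ha hb hab
  refine ⟨fun x => a * γ₁ x + b * γ₂ x, fun x => ?_, ?_, fun σ x => by simp only [hγ₁sym, hγ₂sym],
    fun i j => ?_⟩
  · have := hγ₁0 x; have := hγ₂0 x; positivity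
  · rw [sum_add_distrib, ← mul_sum, ← mul_sum, hγ₁1, hγ₂1, mul_one, mul_one, hab]
  · simp only [Matrix.add_apply, Matrix.smul_apply, smul_eq_mul, hγ₁A, hγ₂B, mul_sum,
      ← sum_add_distrib]
    exact sum_congr rfl fun x _ => by split_ifs <;> ring

lemma exists_eq_sum_smul_diracMarginal {A : Matrix (Fin ℓ) (Fin ℓ) ℝ}
    (hA : A ∈ repr2Marginals ℓ M) :
    ∃ γ : (Fin (M + 2) → Fin ℓ) → ℝ, (∀ x, 0 ≤ γ x) ∧ ∑ x, γ x = 1 ∧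
      A = ∑ x, γ x • diracMarginal M (occupationFraction x) := by
  obtain ⟨γ, hγ0, hγ1, hγsym, hγA⟩ := hA
  refine ⟨γ, hγ0, hγ1, Matrix.ext fun i j => ?_⟩
  rw [hγA, Matrix.sum_apply]
  exact pairMarginal_eq_sum_mul_diracMarginal (Fintype.card_fin _) hγsym zero_ne_one i j

lemma diracMarginal_occupationFraction_mem_repr2Marginals (x : Fin (M + 2) → Fin ℓ) :
    diracMarginal M (occupationFraction x) ∈ repr2Marginals ℓ M := by
  set rearrangements := ({y | occupancy y = occupancy x} : Finset (Fin (M + 2) → Fin ℓ))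
  have hrearrangements : (#rearrangements : ℝ) ≠ 0 := by
    exact_mod_cast (card_pos.mpr ⟨x, by simp [rearrangements]⟩).ne'
  set γ : (Fin (M + 2) → Fin ℓ) → ℝ :=
    fun y => if y ∈ rearrangements then (#rearrangements : ℝ)⁻¹ else 0
  have hγ1 : ∑ y, γ y = 1 := by
    rw [sum_ite_mem, univ_inter, sum_const, nsmul_eq_mul, mul_inv_cancel₀ hrearrangements]
  have hγsym : ∀ (σ : Equiv.Perm (Fin (M + 2))) y, γ (y ∘ σ) = γ y := by
    simp [γ, rearrangements, occupancy_comp_perm]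
  refine ⟨γ, fun y => by positivity, hγ1, hγsym, fun i j => ?_⟩
  change _ = pairMarginal γ 0 1 i j
  rw [pairMarginal_eq_sum_mul_diracMarginal (Fintype.card_fin _) hγsym zero_ne_one,
    ← one_mul (diracMarginal M _ i j), ← hγ1, sum_mul]
  refine sum_congr rfl fun y _ => ?_
  by_cases hy : y ∈ rearrangements
  · have hxy : occupationFraction y = occupationFraction x := by
      unfold occupationFraction
      rw [(mem_filter.mp hy).2]
    rw [hxy]
  · simp [γ, hy]

lemma sparseExtremals_eq_range :
    sparseExtremals ℓ M
      = Set.range fun x : Fin (M + 2) → Fin ℓ => diracMarginal M (occupationFraction x) := by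
  ext Γ
  constructor
  · rintro ⟨lam, -, hsum, hk, rfl⟩
    choose k hk using hk
    have hksum : ∑ i, k i = Fintype.card (Fin (M + 2)) := by
      simp_rw [hk, ← sum_div] at hsum
      rw [div_eq_one_iff_eq (by positivity)] at hsum
      rw [Fintype.card_fin]
      exact_mod_cast hsum
    obtain ⟨x, hx⟩ := exists_occupancy_eq k hksum
    refine ⟨x, congrArg _ (funext fun i => ?_)⟩
    simp [occupationFraction, hx, hk]
  · rintro ⟨x, rfl⟩
    exact ⟨occupationFraction x, fun i => by unfold occupationFraction; positivity,
      sum_occupationFraction x, fun i => ⟨occupancy x i, by simp [occupationFraction]⟩, rfl⟩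

lemma sparseExtremals_subset_repr2Marginals : sparseExtremals ℓ M ⊆ repr2Marginals ℓ M := by
  rw [sparseExtremals_eq_range]
  exact Set.range_subset_iff.mpr diracMarginal_occupationFraction_mem_repr2Marginals

lemma repr2Marginals_eq_convexHull : repr2Marginals ℓ M = convexHull ℝ (sparseExtremals ℓ M) := by
  refine subset_antisymm (fun A hA => ?_)
    (convexHull_min sparseExtremals_subset_repr2Marginals convex_repr2Marginals)
  obtain ⟨γ, hγ0, hγ1, rfl⟩ := exists_eq_sum_smul_diracMarginal hA
  rw [sparseExtremals_eq_range]
  exact (convex_convexHull ℝ _).sum_mem (fun x _ => hγ0 x) hγ1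
    fun x _ => subset_convexHull ℝ _ ⟨x, rfl⟩

lemma marginalDefect_nonneg {A : Matrix (Fin ℓ) (Fin ℓ) ℝ} (hA : A ∈ repr2Marginals ℓ M) :
    0 ≤ marginalDefect M A := by
  obtain ⟨γ, hγ0, hγ1, rfl⟩ := exists_eq_sum_smul_diracMarginal hA
  rw [marginalDefect_sum_smul_diracMarginal hγ1 sum_occupationFraction]
  exact mul_nonneg (by positivity) (sum_nonneg fun x _ => mul_nonneg (hγ0 x) (by positivity))

lemma eq_diracMarginal_of_marginalDefect_eq_zero {A : Matrix (Fin ℓ) (Fin ℓ) ℝ}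
    (hA : A ∈ repr2Marginals ℓ M) (h0 : marginalDefect M A = 0) :
    A = diracMarginal M fun i => ∑ j, A i j := by
  obtain ⟨γ, hγ0, hγ1, rfl⟩ := exists_eq_sum_smul_diracMarginal hA
  rw [marginalDefect_sum_smul_diracMarginal hγ1 sum_occupationFraction] at h0
  have hterm := (Fintype.sum_eq_zero_iff_of_nonneg fun x => mul_nonneg (hγ0 x) (by positivity)).mp
    ((mul_eq_zero.mp h0).resolve_left (by positivity))
  simp only [sum_sum_smul_diracMarginal_apply γ sum_occupationFraction]
  calc ∑ x, γ x • diracMarginal M (occupationFraction x)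
      = ∑ x, γ x • diracMarginal M fun i => ∑ y, γ y * occupationFraction y i := by
        refine sum_congr rfl fun x _ => ?_
        rcases mul_eq_zero.mp (congrFun hterm x) with hx | hx
        · rw [hx, zero_smul, zero_smul]
        · rw [eq_of_sum_sub_sq_eq_zero hx]
    _ = _ := by rw [← sum_smul, hγ1, one_smul]

lemma diracMarginal_mem_extremePoints {lam : Fin ℓ → ℝ} (hlam : ∑ i, lam i = 1)
    (hmem : diracMarginal M lam ∈ repr2Marginals ℓ M) :
    diracMarginal M lam ∈ Set.extremePoints ℝ (repr2Marginals ℓ M) := by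
  refine mem_extremePoints_iff_left.mpr ⟨hmem, fun A hA B hB ⟨a, b, ha, hb, hab, hΓ⟩ => ?_⟩
  have hdA := mul_nonneg ha.le (marginalDefect_nonneg hA)
  have hdB := mul_nonneg hb.le (marginalDefect_nonneg hB)
  have hsplit := (marginalDefect_add_smul (M := M) hab A B).symm
  rw [hΓ, marginalDefect_diracMarginal hlam,
    add_eq_zero_iff_of_nonneg (add_nonneg hdA hdB) (by positivity),
    add_eq_zero_iff_of_nonneg hdA hdB] at hsplit
  obtain ⟨⟨hA0, hB0⟩, hrow⟩ := hsplit
  have hAB : A = B := by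
    rw [eq_diracMarginal_of_marginalDefect_eq_zero hA ((mul_eq_zero.mp hA0).resolve_left ha.ne'),
      eq_diracMarginal_of_marginalDefect_eq_zero hB ((mul_eq_zero.mp hB0).resolve_left hb.ne'),
      eq_of_sum_sub_sq_eq_zero ((mul_eq_zero.mp hrow).resolve_left (by positivity))]
  rw [← hΓ, ← hAB, ← add_smul, hab, one_smul]

end Representability

/-- **Characterization of the extreme points of the discrete `N`-representable
2-marginals:** the extreme points of `ℛ₂` are exactly the matrices
`(N/(N−1))λλᵀ − (1/(N−1))diag(λ)` with `λ ≥ 0`, `𝟙ᵀλ = 1`, `λ_i ∈ {0,1/N,2/N,…}`;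
in particular `ℛ₂` is the convex hull of these matrices. -/
theorem extreme_points_of_repr2Marginals (ℓ M : ℕ) :
    Set.extremePoints ℝ (repr2Marginals ℓ M) = sparseExtremals ℓ M ∧
    repr2Marginals ℓ M = convexHull ℝ (sparseExtremals ℓ M) := by
  have hhull := repr2Marginals_eq_convexHull (ℓ := ℓ) (M := M)
  refine ⟨subset_antisymm ?_ ?_, hhull⟩
  · rw [hhull]
    exact extremePoints_convexHull_subset
  · rintro _ ⟨lam, hnn, hlam, hk, rfl⟩
    exact diracMarginal_mem_extremePoints hlam
      (sparseExtremals_subset_repr2Marginals ⟨lam, hnn, hlam, hk, rfl⟩)
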